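/- Let F_1, …, F_n be pairwise disjoint matchings of size n in a graph, and let R be a rainbow matching of maximum size. For e ∈ R let deg(e) be the number of unrepresented matchings F_i for which e is half-F_i-wasteful, and let D = {e ∈ R : deg(e) ≥ 5}. Then there exist sets S(e) ⊆ R for e ∈ D such that: (1) |S(e)| ≥ deg(e)/2; (2) every f ∈ S(e) satisfies deg(f) ≤ 2; and (3) S(e) ∩ S(e') = ∅ whenever e, e' ∈ D are distinct. -/

import Mathlib

/-!
Write `R` for the rainbow matching and call a vertex uncovered if no edge of `R` contains it.
By maximality of `R`, an edge of an unrepresented matching that meets only `e ∈ R` joins a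
vertex of `e` to an uncovered vertex (a pendant edge at `e`), and pendant edges at `e` from
different unrepresented matchings intersect. Hence, once one of them, `as`, is fixed, those of
any two further matchings both pass through `a`.

Let `{e, f}` be half-`Fᵢ`-wasteful with `e = aa'`, `f = pp'`, `g_e = as`, `g_f = pw`,
`g_{ef} = a'p'`. If `deg e ≥ 5`, there are fresh pendant edges `az`, so no `Fⱼ` with `j ≠ i`
has a pendant edge `pw'` at `f`: otherwise `a'p', pw', az` could replace `e, f` in `R`. So
`deg f ≤ 2`. Similarly `f` cannot be paired with a second `e'` of degree `≥ 5`: for the same `i`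
three disjoint edges of `Fᵢ` would meet `f`; for another `i'` either the argument above applies
or `a'p', b'p, az, by` replace `e, e', f`. Taking `S(e)` to be the partners `f` of `e`, each `f`
is the partner for at most `deg f ≤ 2` matchings, so `|S(e)| ≥ deg(e)/2`.
-/


/-- Two graph edges intersect (share a vertex). -/
def Meets {V : Type*} (e f : Sym2 V) : Prop := ∃ v, v ∈ e ∧ v ∈ f

/-- `g` intersects `e` and no other edge of the matching `R`. -/
def MeetsOnly {V : Type*} (R : Finset (Sym2 V)) (g e : Sym2 V) : Prop :=
  Meets g e ∧ ∀ f ∈ R, f ≠ e → ¬ Meets g f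

/-- The pair `{e, f}` of edges of `R` is half-`A`-wasteful: there are edges
`g_e, g_f, g_{ef} ∈ A` such that `g_e` intersects `e` and no other edge of `R`, `g_f`
intersects `f` and no other edge of `R`, and `g_{ef}` intersects both `e` and `f`. -/
def HalfWastefulPair {V : Type*} (R A : Finset (Sym2 V)) (e f : Sym2 V) : Prop :=
  ∃ ge ∈ A, ∃ gf ∈ A, ∃ gef ∈ A,
    MeetsOnly R ge e ∧ MeetsOnly R gf f ∧ Meets gef e ∧ Meets gef f

/-- The edge `e ∈ R` is half-`A`-wasteful: some pair `{e, f}` with `f ∈ R` is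
half-`A`-wasteful. -/
def HalfWasteful {V : Type*} (R A : Finset (Sym2 V)) (e : Sym2 V) : Prop :=
  ∃ f ∈ R, f ≠ e ∧ HalfWastefulPair R A e f

/-- The number of unrepresented matchings `F i` (i.e. `i ∉ I`) for which `e` is
half-`F i`-wasteful. -/
noncomputable def hwDeg {V : Type*} {n : ℕ} (F : Fin n → Finset (Sym2 V))
    (I : Finset (Fin n)) (R : Finset (Sym2 V)) (e : Sym2 V) : ℕ :=
  {i : Fin n | i ∉ I ∧ HalfWasteful R (F i) e}.ncard


section Meets

variable {V : Type*}

theorem Meets.symm {e f : Sym2 V} (h : Meets e f) : Meets f e :=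
  let ⟨v, hve, hvf⟩ := h
  ⟨v, hvf, hve⟩

theorem meets_self (e : Sym2 V) : Meets e e :=
  ⟨e.out.1, Sym2.out_fst_mem e, Sym2.out_fst_mem e⟩

theorem mk_meets_mk_iff {x y u w : V} :
    Meets s(x, y) s(u, w) ↔ x = u ∨ x = w ∨ y = u ∨ y = w := by
  simp [Meets, or_and_right, exists_or, or_assoc]

theorem not_meets_of_meets_of_meets {g f₁ f₂ f₃ : Sym2 V} (h₁₂ : ¬ Meets f₁ f₂)
    (h₁₃ : ¬ Meets f₁ f₃) (h₂₃ : ¬ Meets f₂ f₃) (h₁ : Meets g f₁) (h₂ : Meets g f₂) :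
    ¬ Meets g f₃ := by
  induction g using Sym2.ind with
  | h x y =>
    rintro ⟨v₃, hv₃, hv₃'⟩
    obtain ⟨v₁, hv₁, hv₁'⟩ := h₁
    obtain ⟨v₂, hv₂, hv₂'⟩ := h₂
    simp only [Sym2.mem_iff] at hv₁ hv₂ hv₃
    grind [Meets]

theorem eq_of_pairwise_meets {e : Sym2 V} {x₀ x₁ x₂ z₀ z₁ z₂ : V}
    (hx₀ : x₀ ∈ e) (hx₁ : x₁ ∈ e) (hx₂ : x₂ ∈ e) (hz₀ : z₀ ∉ e) (hz₁ : z₁ ∉ e) (hz₂ : z₂ ∉ e)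
    (h₀₁ : Meets s(x₀, z₀) s(x₁, z₁)) (h₀₂ : Meets s(x₀, z₀) s(x₂, z₂))
    (h₁₂ : Meets s(x₁, z₁) s(x₂, z₂)) (n₀₂ : s(x₀, z₀) ≠ s(x₂, z₂))
    (n₁₂ : s(x₁, z₁) ≠ s(x₂, z₂)) : x₀ = x₁ := by
  induction e using Sym2.ind with
  | h a b =>
    simp only [mk_meets_mk_iff, Sym2.eq_iff, Sym2.mem_iff, ne_eq] at *
    grind

theorem HalfWastefulPair.symm {R A : Finset (Sym2 V)} {e f : Sym2 V}
    (h : HalfWastefulPair R A e f) : HalfWastefulPair R A f e :=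
  let ⟨ge, hge, gf, hgf, gef, hgef, hoe, hof, hme, hmf⟩ := h
  ⟨gf, hgf, ge, hge, gef, hgef, hof, hoe, hmf, hme⟩

end Meets

structure IsMaxRainbow {V : Type*} {n : ℕ} (F : Fin n → Finset (Sym2 V)) (I : Finset (Fin n))
    (c : Fin n → Sym2 V) : Prop where
  not_isDiag : ∀ i, ∀ g ∈ F i, ¬ g.IsDiag
  isMatching : ∀ i, ∀ g ∈ F i, ∀ g' ∈ F i, g ≠ g' → ¬ Meets g g'
  disjoint : ∀ i j, i ≠ j → Disjoint (F i) (F j)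
  mem : ∀ i ∈ I, c i ∈ F i
  rainbow : ∀ i ∈ I, ∀ j ∈ I, i ≠ j → ¬ Meets (c i) (c j)
  card_le : ∀ (J : Finset (Fin n)) (d : Fin n → Sym2 V), (∀ i ∈ J, d i ∈ F i) →
    (∀ i ∈ J, ∀ j ∈ J, i ≠ j → ¬ Meets (d i) (d j)) → J.card ≤ I.card

open Classical in
noncomputable def hwIndices {V : Type*} {n : ℕ} (F : Fin n → Finset (Sym2 V))
    (I : Finset (Fin n)) (R : Finset (Sym2 V)) (e : Sym2 V) : Finset (Fin n) :=
  Finset.univ.filter fun i => i ∉ I ∧ HalfWasteful R (F i) e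

@[simp]
theorem mem_hwIndices {V : Type*} {n : ℕ} {F : Fin n → Finset (Sym2 V)} {I : Finset (Fin n)}
    {R : Finset (Sym2 V)} {e : Sym2 V} {i : Fin n} :
    i ∈ hwIndices F I R e ↔ i ∉ I ∧ HalfWasteful R (F i) e := by
  simp [hwIndices]

theorem hwDeg_eq_card {V : Type*} {n : ℕ} (F : Fin n → Finset (Sym2 V)) (I : Finset (Fin n))
    (R : Finset (Sym2 V)) (e : Sym2 V) : hwDeg F I R e = (hwIndices F I R e).card := by
  rw [hwDeg, ← Set.ncard_coe_finset]
  congr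
  ext
  simp

open Classical in
noncomputable def hwPartner {V : Type*} (R A : Finset (Sym2 V)) (e : Sym2 V) : Sym2 V :=
  if h : HalfWasteful R A e then h.choose else e

theorem hwPartner_spec {V : Type*} {R A : Finset (Sym2 V)} {e : Sym2 V}
    (h : HalfWasteful R A e) :
    hwPartner R A e ∈ R ∧ hwPartner R A e ≠ e ∧ HalfWastefulPair R A e (hwPartner R A e) := by
  rw [hwPartner, dif_pos h]
  exact h.choose_spec

theorem hwDeg_le_two_mul_card_image {V : Type*} [DecidableEq V] {n : ℕ}
    {F : Fin n → Finset (Sym2 V)} {I : Finset (Fin n)} {R : Finset (Sym2 V)} {e : Sym2 V}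
    (he : e ∈ R) (h : ∀ i ∈ hwIndices F I R e, hwDeg F I R (hwPartner R (F i) e) ≤ 2) :
    hwDeg F I R e ≤ 2 * ((hwIndices F I R e).image fun i => hwPartner R (F i) e).card := by
  rw [hwDeg_eq_card]
  refine Finset.card_le_mul_card_image _ 2 fun f hf => ?_
  obtain ⟨i, hi, rfl⟩ := Finset.mem_image.mp hf
  -- every matching in the fibre over the partner `f` of `e` makes `f` half-wasteful
  refine le_trans (Finset.card_le_card fun j hj => ?_) (hwDeg_eq_card .. ▸ h i hi)
  obtain ⟨hj, hji⟩ := Finset.mem_filter.mp hj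
  obtain ⟨hjI, hjw⟩ := mem_hwIndices.mp hj
  obtain ⟨-, hpe, hpj⟩ := hwPartner_spec hjw
  exact mem_hwIndices.mpr ⟨hjI, e, he, hji ▸ hpe.symm, hji ▸ hpj.symm⟩

def Uncovered {V : Type*} (R : Finset (Sym2 V)) (v : V) : Prop := ∀ f ∈ R, v ∉ f

structure IsPendant {V : Type*} [DecidableEq V] {n : ℕ} (F : Fin n → Finset (Sym2 V))
    (I : Finset (Fin n)) (c : Fin n → Sym2 V) (i : Fin n) (e : Sym2 V) (x z : V) : Prop where
  notMem : i ∉ I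
  mem : s(x, z) ∈ F i
  mem_left : x ∈ e
  uncovered : Uncovered (I.image c) z

namespace IsMaxRainbow

variable {V : Type*} {n : ℕ} {F : Fin n → Finset (Sym2 V)} {I : Finset (Fin n)}
  {c : Fin n → Sym2 V} (C : IsMaxRainbow F I c)
include C

theorem injOn : Set.InjOn c I := by
  intro i hi j hj h
  by_contra hij
  exact C.rainbow i hi j hj hij (h ▸ meets_self (c i))

theorem ne_of_mem_of_ne {i j : Fin n} (hij : i ≠ j) {g h : Sym2 V} (hg : g ∈ F i)
    (hh : h ∈ F j) : g ≠ h := by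
  rintro rfl
  exact Finset.disjoint_left.mp (C.disjoint i j hij) hg hh

theorem card_add_length_le {I' : Finset (Fin n)} (hI' : I' ⊆ I) (L : List (Fin n × Sym2 V))
    (hL : ∀ x ∈ L, x.1 ∉ I ∧ x.2 ∈ F x.1) (hnodup : (L.map Prod.fst).Nodup)
    (hdisj : L.Pairwise fun x y => ¬ Meets x.2 y.2)
    (hI'L : ∀ k ∈ I', ∀ x ∈ L, ¬ Meets (c k) x.2) :
    I'.card + L.length ≤ I.card := by
  set P := (L.map Prod.fst).toFinset
  have hP : ∀ k ∈ P, ∃ g, (k, g) ∈ L := by simp [P]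
  choose g hg using hP
  have hI'P : Disjoint I' P :=
    Finset.disjoint_left.mpr fun k hk hkP => (hL _ (hg k hkP)).1 (hI' hk)
  set d : Fin n → Sym2 V := fun k => if hk : k ∈ P then g k hk else c k
  have hdP : ∀ k (hk : k ∈ P), d k = g k hk := fun k hk => dif_pos hk
  have hdI' : ∀ k ∈ I', d k = c k := fun k hk => dif_neg (Finset.disjoint_left.mp hI'P hk)
  have hJ := C.card_le (I' ∪ P) d ?_ ?_
  · rwa [Finset.card_union_of_disjoint hI'P, List.toFinset_card_of_nodup hnodup,
      List.length_map] at hJ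
  · intro k hk
    rcases Finset.mem_union.mp hk with hk | hk
    · rw [hdI' k hk]; exact C.mem k (hI' hk)
    · rw [hdP k hk]; exact (hL _ (hg k hk)).2
  · intro k hk k' hk' hkk'
    rcases Finset.mem_union.mp hk with hk | hk <;> rcases Finset.mem_union.mp hk' with hk' | hk'
    · rw [hdI' k hk, hdI' k' hk']; exact C.rainbow k (hI' hk) k' (hI' hk') hkk'
    · rw [hdI' k hk, hdP k' hk']; exact hI'L k hk _ (hg k' hk')
    · rw [hdP k hk, hdI' k' hk']; exact fun h => hI'L k' hk' _ (hg k hk) h.symm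
    · rw [hdP k hk, hdP k' hk']
      have : Std.Symm fun x y : Fin n × Sym2 V => ¬ Meets x.2 y.2 :=
        ⟨fun _ _ h h' => h h'.symm⟩
      exact hdisj.forall (hg k hk) (hg k' hk') fun h => hkk' (congrArg Prod.fst h)

variable [DecidableEq V]

theorem not_meets {e f : Sym2 V} (he : e ∈ I.image c) (hf : f ∈ I.image c) (hef : e ≠ f) :
    ¬ Meets e f := by
  obtain ⟨i, hi, rfl⟩ := Finset.mem_image.mp he
  obtain ⟨j, hj, rfl⟩ := Finset.mem_image.mp hf
  exact C.rainbow i hi j hj (fun h => hef (h ▸ rfl))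

theorem eq_of_mem_of_mem {e f : Sym2 V} (he : e ∈ I.image c) (hf : f ∈ I.image c) {v : V}
    (hve : v ∈ e) (hvf : v ∈ f) : f = e := by
  by_contra hfe
  exact C.not_meets hf he hfe ⟨v, hvf, hve⟩

theorem ne_of_mk_mem_image {x y : V} (he : s(x, y) ∈ I.image c) : x ≠ y := by
  obtain ⟨j, hj, hxy⟩ := Finset.mem_image.mp he
  exact fun h => C.not_isDiag j _ (C.mem j hj) (by rw [hxy, Sym2.mk_isDiag_iff]; exact h)

theorem length_le_card_of_swap {T : Finset (Sym2 V)} (hTR : T ⊆ I.image c)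
    (L : List (Fin n × Sym2 V)) (hL : ∀ x ∈ L, x.1 ∉ I ∧ x.2 ∈ F x.1)
    (hT : ∀ x ∈ L, ∀ v ∈ x.2, Uncovered (I.image c) v ∨ ∃ e ∈ T, v ∈ e)
    (hnodup : (L.map Prod.fst).Nodup) (hdisj : L.Pairwise fun x y => ¬ Meets x.2 y.2) :
    L.length ≤ T.card := by
  set I' := I.filter fun i => c i ∉ T
  have hI'L : ∀ k ∈ I', ∀ x ∈ L, ¬ Meets (c k) x.2 := by
    rintro k hk x hx ⟨v, hvc, hvx⟩
    obtain ⟨hkI, hkT⟩ := Finset.mem_filter.mp hk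
    have hkR := Finset.mem_image_of_mem c hkI
    rcases hT x hx v hvx with hv | ⟨e, heT, hve⟩
    · exact hv _ hkR hvc
    · exact hkT (C.eq_of_mem_of_mem (hTR heT) hkR hve hvc ▸ heT)
  have hJ := C.card_add_length_le (I' := I') (Finset.filter_subset _ I) L hL hnodup hdisj hI'L
  have hTI : (I.filter fun i => c i ∈ T).card ≤ T.card :=
    Finset.card_le_card_of_injOn c (fun i hi => (Finset.mem_filter.mp hi).2)
      (C.injOn.mono (Finset.filter_subset _ _))
  have : (I.filter fun i => c i ∈ T).card + I'.card = I.card :=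
    Finset.card_filter_add_card_filter_not _
  omega

theorem exists_isPendant_of_meetsOnly {i : Fin n} (hi : i ∉ I) {g e : Sym2 V} (hg : g ∈ F i)
    (he : e ∈ I.image c) (hge : MeetsOnly (I.image c) g e) :
    ∃ x z, g = s(x, z) ∧ IsPendant F I c i e x z := by
  obtain ⟨⟨x, hxg, hxe⟩, honly⟩ := hge
  refine ⟨x, Sym2.Mem.other hxg, (Sym2.other_spec hxg).symm,
    ⟨hi, (Sym2.other_spec hxg).symm ▸ hg, hxe, fun f hf hzf => ?_⟩⟩
  by_cases hfe : f = e
  · subst hfe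
    -- otherwise `g = f`, an edge of a represented matching
    have hxz : x ≠ Sym2.Mem.other hxg := fun h =>
      C.not_isDiag i g hg (by rw [← Sym2.other_spec hxg, Sym2.mk_isDiag_iff]; exact h)
    have hfg : f = g := (Sym2.other_spec hxg) ▸ (Sym2.mem_and_mem_iff hxz).mp ⟨hxe, hzf⟩
    obtain ⟨j, hj, rfl⟩ := Finset.mem_image.mp hf
    exact C.ne_of_mem_of_ne (by rintro rfl; exact hi hj) hg (C.mem j hj) hfg.symm
  · exact honly f hf hfe ⟨_, Sym2.other_mem hxg, hzf⟩

theorem exists_isPendant_of_halfWasteful {i : Fin n} (hi : i ∉ I) {e : Sym2 V}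
    (he : e ∈ I.image c) (h : HalfWasteful (I.image c) (F i) e) :
    ∃ x z, IsPendant F I c i e x z := by
  obtain ⟨-, -, -, g, hg, -, -, -, -, hge, -⟩ := h
  obtain ⟨x, z, -, hP⟩ := C.exists_isPendant_of_meetsOnly hi hg he hge
  exact ⟨x, z, hP⟩

theorem isPendant_meets {e : Sym2 V} (he : e ∈ I.image c) {i i' : Fin n} (hii' : i ≠ i')
    {x z x' z' : V} (hP : IsPendant F I c i e x z) (hP' : IsPendant F I c i' e x' z') :
    Meets s(x, z) s(x', z') := by
  by_contra h
  have := C.length_le_card_of_swap (T := {e}) (by simp [he]) [(i, s(x, z)), (i', s(x', z'))]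
    (by simp [hP.notMem, hP'.notMem, hP.mem, hP'.mem])
    (by simp [hP.mem_left, hP'.mem_left, hP.uncovered, hP'.uncovered]) (by simp [hii'])
    (by simp [h])
  simp at this

theorem left_eq_of_three_isPendant {e : Sym2 V} (he : e ∈ I.image c) {i₀ i₁ i₂ : Fin n}
    (h₀₁ : i₀ ≠ i₁) (h₀₂ : i₀ ≠ i₂) (h₁₂ : i₁ ≠ i₂) {x₀ x₁ x₂ z₀ z₁ z₂ : V}
    (hP₀ : IsPendant F I c i₀ e x₀ z₀) (hP₁ : IsPendant F I c i₁ e x₁ z₁)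
    (hP₂ : IsPendant F I c i₂ e x₂ z₂) : x₀ = x₁ :=
  eq_of_pairwise_meets hP₀.mem_left hP₁.mem_left hP₂.mem_left (hP₀.uncovered e he)
    (hP₁.uncovered e he) (hP₂.uncovered e he) (C.isPendant_meets he h₀₁ hP₀ hP₁)
    (C.isPendant_meets he h₀₂ hP₀ hP₂) (C.isPendant_meets he h₁₂ hP₁ hP₂)
    (C.ne_of_mem_of_ne h₀₂ hP₀.mem hP₂.mem) (C.ne_of_mem_of_ne h₁₂ hP₁.mem hP₂.mem)

theorem exists_two_isPendant {e : Sym2 V} (he : e ∈ I.image c) {X : Finset (Fin n)}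
    (hX : X.card + 2 ≤ hwDeg F I (I.image c) e) :
    ∃ i₁ i₂, i₁ ∉ X ∧ i₂ ∉ X ∧ i₁ ≠ i₂ ∧
      ∃ x₁ z₁ x₂ z₂, IsPendant F I c i₁ e x₁ z₁ ∧ IsPendant F I c i₂ e x₂ z₂ := by
  have hcard : 1 < (hwIndices F I (I.image c) e \ X).card := by
    have := Finset.le_card_sdiff X (hwIndices F I (I.image c) e)
    rw [← hwDeg_eq_card] at this
    omega
  obtain ⟨i₁, h₁, i₂, h₂, h₁₂⟩ := Finset.one_lt_card.mp hcard
  simp only [Finset.mem_sdiff, mem_hwIndices] at h₁ h₂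
  obtain ⟨x₁, z₁, hP₁⟩ := C.exists_isPendant_of_halfWasteful h₁.1.1 he h₁.1.2
  obtain ⟨x₂, z₂, hP₂⟩ := C.exists_isPendant_of_halfWasteful h₂.1.1 he h₂.1.2
  exact ⟨i₁, i₂, h₁.2, h₂.2, h₁₂, x₁, z₁, x₂, z₂, hP₁, hP₂⟩

theorem exists_isPendant_of_five_le {e : Sym2 V} (he : e ∈ I.image c)
    (hdeg : 5 ≤ hwDeg F I (I.image c) e) {i₀ : Fin n} {a s : V}
    (hP₀ : IsPendant F I c i₀ e a s) {X : Finset (Fin n)} (hX₀ : i₀ ∈ X) (hX : X.card ≤ 3)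
    (v : V) : ∃ i z, i ∉ X ∧ z ≠ v ∧ IsPendant F I c i e a z := by
  obtain ⟨i₁, i₂, hX₁, hX₂, h₁₂, x₁, z₁, x₂, z₂, hP₁, hP₂⟩ := C.exists_two_isPendant he
    (X := X) (by omega)
  have h₀₁ : i₀ ≠ i₁ := fun h => hX₁ (h ▸ hX₀)
  have h₀₂ : i₀ ≠ i₂ := fun h => hX₂ (h ▸ hX₀)
  obtain rfl := C.left_eq_of_three_isPendant he h₀₁ h₀₂ h₁₂ hP₀ hP₁ hP₂
  obtain rfl := C.left_eq_of_three_isPendant he h₀₂ h₀₁ h₁₂.symm hP₀ hP₂ hP₁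
  have hz₁₂ : z₁ ≠ z₂ := fun h => C.ne_of_mem_of_ne h₁₂ hP₁.mem hP₂.mem (h ▸ rfl)
  by_cases hv : z₁ = v
  · exact ⟨i₂, z₂, hX₂, fun h => hz₁₂ (hv.trans h.symm), hP₂⟩
  · exact ⟨i₁, z₁, hX₁, hv, hP₁⟩

theorem exists_isPendant_of_halfWastefulPair {i : Fin n} (hi : i ∉ I) {e f : Sym2 V}
    (he : e ∈ I.image c) (hf : f ∈ I.image c) (hef : e ≠ f)
    (h : HalfWastefulPair (I.image c) (F i) e f) :
    ∃ a a' p p' s w : V, e = s(a, a') ∧ f = s(p, p') ∧ IsPendant F I c i e a s ∧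
      IsPendant F I c i f p w ∧ s(a', p') ∈ F i := by
  obtain ⟨ge, hge, gf, hgf, gef, hgef, hoe, hof, ⟨x, hxg, hxe⟩, ⟨y, hyg, hyf⟩⟩ := h
  obtain ⟨a, s, rfl, hP⟩ := C.exists_isPendant_of_meetsOnly hi hge he hoe
  obtain ⟨p, w, rfl, hQ⟩ := C.exists_isPendant_of_meetsOnly hi hgf hf hof
  have hxy : x ≠ y := fun h => C.not_meets he hf hef ⟨x, hxe, h ▸ hyf⟩
  obtain rfl : gef = s(x, y) := (Sym2.mem_and_mem_iff hxy).mp ⟨hxg, hyg⟩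
  -- `g_{ef}` meets both `e` and `f`, so it is neither `g_e` nor `g_f`, and it avoids them
  have hax : a ≠ x := fun h => C.isMatching i _ hgef _ hge
    (fun h' => hoe.2 f hf hef.symm (h' ▸ ⟨y, hyg, hyf⟩)) ⟨x, hxg, h ▸ Sym2.mem_mk_left a s⟩
  have hpy : p ≠ y := fun h => C.isMatching i _ hgef _ hgf
    (fun h' => hof.2 e he hef (h' ▸ ⟨x, hxg, hxe⟩)) ⟨y, hyg, h ▸ Sym2.mem_mk_left p w⟩
  exact ⟨a, x, p, y, s, w, (Sym2.mem_and_mem_iff hax).mp ⟨hP.mem_left, hxe⟩,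
    (Sym2.mem_and_mem_iff hpy).mp ⟨hQ.mem_left, hyf⟩, hP, hQ, hgef⟩

theorem index_eq_of_isPendant {a a' p p' : V} (he : s(a, a') ∈ I.image c)
    (hf : s(p, p') ∈ I.image c) (hef : s(a, a') ≠ s(p, p'))
    (hdeg : 5 ≤ hwDeg F I (I.image c) s(a, a')) {i j : Fin n} {s w : V}
    (hP : IsPendant F I c i s(a, a') a s) (hap : s(a', p') ∈ F i)
    (hQ : IsPendant F I c j s(p, p') p w) : j = i := by
  by_contra hji
  obtain ⟨k, z, hkX, hzw, hR⟩ := C.exists_isPendant_of_five_le he hdeg hP (X := {i, j})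
    (by simp) (Finset.card_le_two.trans (by norm_num)) w
  have := C.length_le_card_of_swap (T := {s(a, a'), s(p, p')})
    (by simp [Finset.insert_subset_iff, he, hf]) [(i, s(a', p')), (j, s(p, w)), (k, s(a, z))]
    (by simp [hP.notMem, hQ.notMem, hR.notMem, hap, hQ.mem, hR.mem])
    (by simp [hQ.uncovered, hR.uncovered]) (by simp at hkX ⊢; grind) ?_
  · exact absurd (this.trans Finset.card_le_two) (by simp)
  have hee := C.not_meets he hf hef
  have ha := C.ne_of_mk_mem_image he
  have hp := C.ne_of_mk_mem_image hf
  have hwe := hQ.uncovered _ he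
  have hwf := hQ.uncovered _ hf
  have hze := hR.uncovered _ he
  have hzf := hR.uncovered _ hf
  simp only [mk_meets_mk_iff, Sym2.mem_iff] at hee hwe hwf hze hzf
  simp only [List.pairwise_cons, List.mem_cons, forall_eq_or_imp, mk_meets_mk_iff]
  grind

theorem hwDeg_le_two {e f : Sym2 V} (he : e ∈ I.image c) (hf : f ∈ I.image c) (hef : e ≠ f)
    (hdeg : 5 ≤ hwDeg F I (I.image c) e) {i : Fin n} (hi : i ∉ I)
    (h : HalfWastefulPair (I.image c) (F i) e f) : hwDeg F I (I.image c) f ≤ 2 := by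
  obtain ⟨a, a', p, p', s, w, rfl, rfl, hP, hQ, hap⟩ :=
    C.exists_isPendant_of_halfWastefulPair hi he hf hef h
  by_contra! hdeg'
  obtain ⟨j₁, j₂, hj₁, hj₂, h₁₂, y₁, u₁, y₂, u₂, hQ₁, hQ₂⟩ :=
    C.exists_two_isPendant hf (X := {i}) (by simp; omega)
  rw [Finset.mem_singleton] at hj₁ hj₂
  obtain rfl := C.left_eq_of_three_isPendant hf (Ne.symm hj₁) (Ne.symm hj₂) h₁₂ hQ hQ₁ hQ₂
  exact hj₁ (C.index_eq_of_isPendant he hf hef hdeg hP hap hQ₁)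

theorem eq_of_halfWastefulPair_same_matching {e e' f : Sym2 V} (he : e ∈ I.image c)
    (he' : e' ∈ I.image c) (hf : f ∈ I.image c) (hef : e ≠ f) (he'f : e' ≠ f) {i : Fin n}
    (h : HalfWastefulPair (I.image c) (F i) e f)
    (h' : HalfWastefulPair (I.image c) (F i) e' f) : e = e' := by
  by_contra hee'
  obtain ⟨-, -, g, hg, g₁, hg₁, -, hgo, hg₁e, hg₁f⟩ := h
  obtain ⟨-, -, -, -, g₂, hg₂, -, -, hg₂e', hg₂f⟩ := h'
  -- `g_f`, `g_{ef}` and `g_{e'f}` would be three disjoint edges of `F i` meeting `f`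
  have hgg₁ : g ≠ g₁ := fun h => hgo.2 e he hef (h ▸ hg₁e)
  have hgg₂ : g ≠ g₂ := fun h => hgo.2 e' he' he'f (h ▸ hg₂e')
  have hg₁₂ : g₁ ≠ g₂ := fun h => not_meets_of_meets_of_meets (C.not_meets he he' hee')
    (C.not_meets he hf hef) (C.not_meets he' hf he'f) hg₁e (h ▸ hg₂e') hg₁f
  exact not_meets_of_meets_of_meets (C.isMatching i g hg g₁ hg₁ hgg₁)
    (C.isMatching i g hg g₂ hg₂ hgg₂) (C.isMatching i g₁ hg₁ g₂ hg₂ hg₁₂)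
    hgo.1.symm hg₁f.symm hg₂f.symm

theorem eq_of_halfWastefulPair {e e' f : Sym2 V} (he : e ∈ I.image c) (he' : e' ∈ I.image c)
    (hf : f ∈ I.image c) (hef : e ≠ f) (he'f : e' ≠ f) (hdeg : 5 ≤ hwDeg F I (I.image c) e)
    (hdeg' : 5 ≤ hwDeg F I (I.image c) e') {i i' : Fin n} (hi : i ∉ I) (hi' : i' ∉ I)
    (h : HalfWastefulPair (I.image c) (F i) e f)
    (h' : HalfWastefulPair (I.image c) (F i') e' f) : e = e' := by
  by_cases hii' : i = i'
  · subst hii'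
    exact C.eq_of_halfWastefulPair_same_matching he he' hf hef he'f h h'
  by_contra hee'
  obtain ⟨a, a', p, p', s, w, rfl, rfl, hP, hQ, hap⟩ :=
    C.exists_isPendant_of_halfWastefulPair hi he hf hef h
  obtain ⟨b, b', q, q', s', w', rfl, hpq, hP', hQ', hbq⟩ :=
    C.exists_isPendant_of_halfWastefulPair hi' he' hf he'f h'
  rcases Sym2.eq_iff.mp hpq with ⟨rfl, rfl⟩ | ⟨rfl, rfl⟩
  · exact hii' (C.index_eq_of_isPendant he hf hef hdeg hP hap hQ').symm
  obtain ⟨k, z, hkX, -, hR⟩ := C.exists_isPendant_of_five_le he hdeg hP (X := {i, i'})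
    (by simp) (Finset.card_le_two.trans (by norm_num)) a
  obtain ⟨k', y, hk'X, hyz, hR'⟩ := C.exists_isPendant_of_five_le he' hdeg' hP'
    (X := {i, i', k}) (by simp) Finset.card_le_three z
  have := C.length_le_card_of_swap (T := {s(a, a'), s(b, b'), s(p, p')})
    (by simp [Finset.insert_subset_iff, he, he', hf])
    [(i, s(a', p')), (i', s(b', p)), (k, s(a, z)), (k', s(b, y))]
    (by simp [hP.notMem, hP'.notMem, hR.notMem, hR'.notMem, hap, hbq, hR.mem, hR'.mem])
    (by simp [hR.uncovered, hR'.uncovered]) (by simp at hkX hk'X ⊢; grind) ?_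
  · exact absurd (this.trans Finset.card_le_three) (by simp)
  have hee := C.not_meets he he' hee'
  have hef' := C.not_meets he hf hef
  have he'f' := C.not_meets he' hf he'f
  have ha := C.ne_of_mk_mem_image he
  have hb := C.ne_of_mk_mem_image he'
  have hp := C.ne_of_mk_mem_image hf
  have hze := hR.uncovered _ he
  have hze' := hR.uncovered _ he'
  have hzf := hR.uncovered _ hf
  have hye := hR'.uncovered _ he
  have hye' := hR'.uncovered _ he'
  have hyf := hR'.uncovered _ hf
  simp only [mk_meets_mk_iff, Sym2.mem_iff] at hee hef' he'f' hze hze' hzf hye hye' hyf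
  simp only [List.pairwise_cons, List.mem_cons, forall_eq_or_imp, mk_meets_mk_iff]
  grind

end IsMaxRainbow

theorem stmt_16_general {V : Type*} [DecidableEq V] (G : SimpleGraph V) (n : ℕ)
    (F : Fin n → Finset (Sym2 V))
    (hedges : ∀ i, ∀ e ∈ F i, e ∈ G.edgeSet)
    (hmatch : ∀ i, ∀ e ∈ F i, ∀ f ∈ F i, e ≠ f → ∀ v, v ∈ e → v ∉ f)
    (hdisjF : ∀ i j, i ≠ j → Disjoint (F i) (F j))
    (I : Finset (Fin n)) (c : Fin n → Sym2 V)
    (hc : ∀ i ∈ I, c i ∈ F i)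
    (hdisj : ∀ i ∈ I, ∀ j ∈ I, i ≠ j → ∀ v, v ∈ c i → v ∉ c j)
    (hmax : ∀ (J : Finset (Fin n)) (d : Fin n → Sym2 V),
      (∀ i ∈ J, d i ∈ F i) →
      (∀ i ∈ J, ∀ j ∈ J, i ≠ j → ∀ v, v ∈ d i → v ∉ d j) →
      J.card ≤ I.card) :
    ∃ S : Sym2 V → Finset (Sym2 V),
      ∀ e ∈ I.image c, 5 ≤ hwDeg F I (I.image c) e →
        S e ⊆ I.image c ∧
        hwDeg F I (I.image c) e ≤ 2 * (S e).card ∧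
        (∀ f ∈ S e, hwDeg F I (I.image c) f ≤ 2) ∧
        ∀ e' ∈ I.image c, 5 ≤ hwDeg F I (I.image c) e' → e ≠ e' →
          Disjoint (S e) (S e') := by
  have C : IsMaxRainbow F I c :=
    ⟨fun i g hg => G.not_isDiag_of_mem_edgeSet (hedges i g hg),
      fun i g hg g' hg' hne ⟨v, hv, hv'⟩ => hmatch i g hg g' hg' hne v hv hv', hdisjF, hc,
      fun i hi j hj hij ⟨v, hv, hv'⟩ => hdisj i hi j hj hij v hv hv',
      fun J d hd hdd => hmax J d hd fun i hi j hj hij v hv hv' => hdd i hi j hj hij ⟨v, hv, hv'⟩⟩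
  have hpartner {e : Sym2 V} {i : Fin n} (hi : i ∈ hwIndices F I (I.image c) e) :=
    hwPartner_spec (mem_hwIndices.mp hi).2
  have hdeg_le {e : Sym2 V} (he : e ∈ I.image c) (hdeg : 5 ≤ hwDeg F I (I.image c) e)
      {i : Fin n} (hi : i ∈ hwIndices F I (I.image c) e) :
      hwDeg F I (I.image c) (hwPartner (I.image c) (F i) e) ≤ 2 :=
    C.hwDeg_le_two he (hpartner hi).1 (hpartner hi).2.1.symm hdeg (mem_hwIndices.mp hi).1
      (hpartner hi).2.2
  refine ⟨fun e => (hwIndices F I (I.image c) e).image fun i => hwPartner (I.image c) (F i) e,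
    fun e he hdeg => ⟨?_, hwDeg_le_two_mul_card_image he fun i hi => hdeg_le he hdeg hi, ?_, ?_⟩⟩
  · simp only [Finset.image_subset_iff]
    exact fun i hi => (hpartner hi).1
  · simp only [Finset.forall_mem_image]
    exact fun i hi => hdeg_le he hdeg hi
  · intro e' he' hdeg' hee'
    simp only [Finset.disjoint_left, Finset.mem_image, not_exists, not_and]
    rintro _ ⟨i, hi, rfl⟩ i' hi' hii'
    exact hee' (C.eq_of_halfWastefulPair he he' (hpartner hi).1 (hpartner hi).2.1.symm
      (hii' ▸ (hpartner hi').2.1.symm) hdeg hdeg' (mem_hwIndices.mp hi).1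
      (mem_hwIndices.mp hi').1 (hpartner hi).2.2 (hii' ▸ (hpartner hi').2.2))

/-- Let `F₁, …, Fₙ` be pairwise disjoint matchings of size `n` in a
graph, and `R = I.image c` a maximum-size rainbow matching. Letting `deg e` be the number
of unrepresented matchings `Fᵢ` for which `e` is half-`Fᵢ`-wasteful and
`D = {e ∈ R : deg e ≥ 5}`, there are sets `S(e) ⊆ R` for `e ∈ D` with
`|S(e)| ≥ deg e / 2`, every `f ∈ S(e)` having `deg f ≤ 2`, and `S(e) ∩ S(e') = ∅` for
distinct `e, e' ∈ D`. -/
theorem stmt_16 {V : Type*} [DecidableEq V] (G : SimpleGraph V) (n : ℕ)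
    (F : Fin n → Finset (Sym2 V))
    (hedges : ∀ i, ∀ e ∈ F i, e ∈ G.edgeSet)
    (hmatch : ∀ i, ∀ e ∈ F i, ∀ f ∈ F i, e ≠ f → ∀ v, v ∈ e → v ∉ f)
    (hsize : ∀ i, (F i).card = n)
    (hdisjF : ∀ i j, i ≠ j → Disjoint (F i) (F j))
    (I : Finset (Fin n)) (c : Fin n → Sym2 V)
    (hc : ∀ i ∈ I, c i ∈ F i)
    (hdisj : ∀ i ∈ I, ∀ j ∈ I, i ≠ j → ∀ v, v ∈ c i → v ∉ c j)
    (hmax : ∀ (J : Finset (Fin n)) (d : Fin n → Sym2 V),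
      (∀ i ∈ J, d i ∈ F i) →
      (∀ i ∈ J, ∀ j ∈ J, i ≠ j → ∀ v, v ∈ d i → v ∉ d j) →
      J.card ≤ I.card) :
    ∃ S : Sym2 V → Finset (Sym2 V),
      ∀ e ∈ I.image c, 5 ≤ hwDeg F I (I.image c) e →
        S e ⊆ I.image c ∧
        hwDeg F I (I.image c) e ≤ 2 * (S e).card ∧
        (∀ f ∈ S e, hwDeg F I (I.image c) f ≤ 2) ∧
        ∀ e' ∈ I.image c, 5 ≤ hwDeg F I (I.image c) e' → e ≠ e' →
          Disjoint (S e) (S e') :=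
  stmt_16_general G n F hedges hmatch hdisjF I c hc hdisj hmax
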